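/- With R(x,y) as defined (the disjointness-embedding SR instance on 4n agents), if x and y are disjoint then M = {{a_i, c_i}} ∪ {{b_j, d_j}} is the unique stable matching of R(x,y). -/

import Mathlib

/-! A stable matching of `R(x,y)` cannot pair `cᵢ` away from `aᵢ` (its first choice) unless `aᵢ`
holds a partner it ranks above `cᵢ`, i.e. some `bⱼ` with `xᵢⱼ = 1`; likewise `dⱼ` forces `bⱼ` onto
some `aᵢ` or `cᵢ` with `yᵢⱼ = 1`. A pair `{aᵢ, bⱼ}` would thus need `xᵢⱼ = yᵢⱼ = 1`, which
disjointness rules out; hence `cᵢ` sits with `aᵢ`, and then `bⱼ` with `dⱼ`. For `M₀` itself, every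
pair outside it has a member that strictly prefers its `M₀`-partner already at the level of tiers,
and `rank` refines the tiers. -/

/-- A perfect matching on the agent set: an involution with no fixed points. -/
def IsMatching {S : Type*} (M : S → S) : Prop :=
  (∀ x, M (M x) = x) ∧ ∀ x, M x ≠ x

/-- `{u, v}` is a blocking pair for the matching `M` (lower rank = more preferred). -/
def Blocks {S : Type*} (rank : S → S → ℕ) (M : S → S) (u v : S) : Prop :=
  u ≠ v ∧ M u ≠ v ∧ rank u v < rank u (M u) ∧ rank v u < rank v (M v)

/-- A stable matching: a perfect matching with no blocking pair. -/
def IsStable {S : Type*} (rank : S → S → ℕ) (M : S → S) : Prop :=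
  IsMatching M ∧ ∀ u v, ¬ Blocks rank M u v

/-- Preference tiers of the instance `R(x,y)`: agent `(0,i)` is `aᵢ`, `(1,j)` is `bⱼ`,
`(2,i)` is `cᵢ`, `(3,j)` is `dⱼ`.  Lower tier = more preferred. -/
def Rtier {n : ℕ} (x y : Fin n → Fin n → Bool) (u v : Fin 4 × Fin n) : ℕ :=
  if u.1 = 0 then
    (if v.1 = 1 ∧ x u.2 v.2 = true then 0
     else if v.1 = 2 ∧ v.2 = u.2 then 1 else 2)
  else if u.1 = 1 then
    (if v.1 = 2 ∧ y v.2 u.2 = true then 0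
     else if v.1 = 0 ∧ y v.2 u.2 = true then 1
     else if v.1 = 3 ∧ v.2 = u.2 then 2 else 3)
  else if u.1 = 2 then
    (if v.1 = 0 ∧ v.2 = u.2 then 0 else if v.1 = 1 then 1 else 2)
  else
    (if v.1 = 1 ∧ v.2 = u.2 then 0 else 1)

/-- `rank` is a strict preference ranking consistent with the tier structure of `R(x,y)`
(ties inside a tier are broken arbitrarily). -/
def IsRPref {n : ℕ} (x y : Fin n → Fin n → Bool)
    (rank : Fin 4 × Fin n → Fin 4 × Fin n → ℕ) : Prop :=
  (∀ u v w, v ≠ u → w ≠ u → Rtier x y u v < Rtier x y u w → rank u v < rank u w) ∧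
  (∀ u v w, v ≠ u → w ≠ u → rank u v = rank u w → v = w)

/-- The matching `M₀ = {{aᵢ, cᵢ}} ∪ {{bⱼ, dⱼ}}`. -/
def M0 {n : ℕ} : Fin 4 × Fin n → Fin 4 × Fin n := fun u =>
  if u.1 = 0 then ((2 : Fin 4), u.2) else if u.1 = 1 then ((3 : Fin 4), u.2)
  else if u.1 = 2 then ((0 : Fin 4), u.2) else ((1 : Fin 4), u.2)

section Tiers

variable {S : Type*}

def RefinesTiers (tier rank : S → S → ℕ) : Prop :=
  ∀ u v w, v ≠ u → w ≠ u → tier u v < tier u w → rank u v < rank u w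

lemma Blocks.of_refinesTiers {tier rank : S → S → ℕ} {M : S → S} {u v : S}
    (href : RefinesTiers tier rank) (hnf : ∀ u, M u ≠ u) (h : Blocks tier M u v) :
    Blocks rank M u v :=
  let ⟨huv, hMuv, hu, hv⟩ := h
  ⟨huv, hMuv, href u v (M u) huv.symm (hnf u) hu, href v u (M v) huv (hnf v) hv⟩

lemma IsStable.not_blocks_of_refinesTiers {tier rank : S → S → ℕ} {M : S → S}
    (href : RefinesTiers tier rank) (hM : IsStable rank M) (u v : S) :
    ¬ Blocks tier M u v :=
  fun h ↦ hM.2 u v (h.of_refinesTiers href hM.1.2)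

lemma isStable_of_refinesTiers {tier rank : S → S → ℕ} {M : S → S}
    (href : RefinesTiers tier rank) (hM : IsMatching M)
    (hpref : ∀ u v, u ≠ v → M u ≠ v → tier u (M u) < tier u v ∨ tier v (M v) < tier v u) :
    IsStable rank M := by
  refine ⟨hM, fun u v ⟨huv, hMuv, hu, hv⟩ ↦ ?_⟩
  rcases hpref u v huv hMuv with h | h
  · exact (href u (M u) v (hM.2 u) huv.symm h).not_gt hu
  · exact (href v (M v) u (hM.2 v) huv h).not_gt hv

lemma tier_partner_le_of_first_choice {tier : S → S → ℕ} {M : S → S}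
    (hnb : ∀ u v, ¬ Blocks tier M u v) {u v : S} (hvu : v ≠ u) (hMv : M v ≠ u)
    (hfirst : ∀ w, w ≠ u → tier v u < tier v w) : tier u (M u) ≤ tier u v := by
  by_contra! h
  exact hnb v u ⟨hvu, hMv, hfirst _ hMv, h⟩

end Tiers

local notation "𝒂" i:max => ((0 : Fin 4), i)
local notation "𝒃" i:max => ((1 : Fin 4), i)
local notation "𝒄" i:max => ((2 : Fin 4), i)
local notation "𝒅" i:max => ((3 : Fin 4), i)

section RInstance

variable {n : ℕ} {x y : Fin n → Fin n → Bool}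

lemma isMatching_M0 : IsMatching (M0 (n := n)) := by
  constructor <;> rintro ⟨k, i⟩ <;> fin_cases k <;> simp [M0]

lemma Rtier_M0_lt_or_lt (hdisj : ∀ i j, ¬ (x i j = true ∧ y i j = true))
    (u v : Fin 4 × Fin n) (huv : u ≠ v) (hM0 : M0 u ≠ v) :
    Rtier x y u (M0 u) < Rtier x y u v ∨ Rtier x y v (M0 v) < Rtier x y v u := by
  obtain ⟨k, i⟩ := u
  obtain ⟨l, j⟩ := v
  fin_cases k <;> fin_cases l <;> simp_all [M0, Rtier]
  · by_cases hx : x i j <;> simp [hx, hdisj i j]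
  · by_cases hx : x j i <;> simp [hx, hdisj j i]

lemma Rtier_c_a_lt (i : Fin n) (w : Fin 4 × Fin n) (hw : w ≠ 𝒂 i) :
    Rtier x y (𝒄 i) (𝒂 i) < Rtier x y (𝒄 i) w := by
  obtain ⟨l, j⟩ := w
  fin_cases l <;> simp_all [Rtier]

lemma Rtier_d_b_lt (j : Fin n) (w : Fin 4 × Fin n) (hw : w ≠ 𝒃 j) :
    Rtier x y (𝒅 j) (𝒃 j) < Rtier x y (𝒅 j) w := by
  obtain ⟨l, i⟩ := w
  fin_cases l <;> simp_all [Rtier]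

lemma exists_eq_b_of_Rtier_a_le (i : Fin n) (w : Fin 4 × Fin n) (hw : w ≠ 𝒄 i)
    (h : Rtier x y (𝒂 i) w ≤ Rtier x y (𝒂 i) (𝒄 i)) : ∃ j, w = 𝒃 j ∧ x i j = true := by
  obtain ⟨l, j⟩ := w
  fin_cases l <;> simp_all [Rtier]
  by_cases hx : x i j <;> simp_all

lemma exists_eq_a_or_c_of_Rtier_b_le (j : Fin n) (w : Fin 4 × Fin n) (hw : w ≠ 𝒅 j)
    (h : Rtier x y (𝒃 j) w ≤ Rtier x y (𝒃 j) (𝒅 j)) :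
    ∃ i, (w = 𝒂 i ∨ w = 𝒄 i) ∧ y i j = true := by
  obtain ⟨l, i⟩ := w
  fin_cases l <;> simp_all [Rtier] <;> by_cases hy : y i j <;> simp_all

variable {M : Fin 4 × Fin n → Fin 4 × Fin n}

lemma exists_M_a_eq_b (hM : IsMatching M) (hnb : ∀ u v, ¬ Blocks (Rtier x y) M u v)
    {i : Fin n} (hc : M (𝒄 i) ≠ 𝒂 i) : ∃ j, M (𝒂 i) = 𝒃 j ∧ x i j = true :=
  exists_eq_b_of_Rtier_a_le i _ (fun h ↦ hc (by rw [← h, hM.1]))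
    (tier_partner_le_of_first_choice hnb (by simp) hc (Rtier_c_a_lt i))

lemma exists_M_b_eq_a_or_c (hM : IsMatching M) (hnb : ∀ u v, ¬ Blocks (Rtier x y) M u v)
    {j : Fin n} (hb : M (𝒃 j) ≠ 𝒅 j) : ∃ i, (M (𝒃 j) = 𝒂 i ∨ M (𝒃 j) = 𝒄 i) ∧ y i j = true :=
  exists_eq_a_or_c_of_Rtier_b_le j _ hb
    (tier_partner_le_of_first_choice hnb (by simp) (fun h ↦ hb (by rw [← h, hM.1]))
      (Rtier_d_b_lt j))

/-- An edge `{aᵢ, bⱼ}` would force both `xᵢⱼ` (via `cᵢ`) and `yᵢⱼ` (via `dⱼ`). -/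
lemma M_a_ne_b (hdisj : ∀ i j, ¬ (x i j = true ∧ y i j = true)) (hM : IsMatching M)
    (hnb : ∀ u v, ¬ Blocks (Rtier x y) M u v) (i j : Fin n) : M (𝒂 i) ≠ 𝒃 j := by
  intro hab
  have hba : M (𝒃 j) = 𝒂 i := by rw [← hab, hM.1]
  have hca : M (𝒄 i) ≠ 𝒂 i := fun h ↦ by rw [← h, hM.1] at hab; simp at hab
  obtain ⟨j', hj', hx⟩ := exists_M_a_eq_b hM hnb hca
  obtain ⟨i', hi' | hi', hy⟩ := exists_M_b_eq_a_or_c hM hnb (j := j) (by simp [hba])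
  · obtain rfl : j = j' := by simpa [hab] using hj'
    obtain rfl : i = i' := by simpa [hba] using hi'
    exact hdisj i j ⟨hx, hy⟩
  · simp [hba] at hi'

lemma M_c_eq_a (hdisj : ∀ i j, ¬ (x i j = true ∧ y i j = true)) (hM : IsMatching M)
    (hnb : ∀ u v, ¬ Blocks (Rtier x y) M u v) (i : Fin n) : M (𝒄 i) = 𝒂 i := by
  by_contra hc
  obtain ⟨j, hab, -⟩ := exists_M_a_eq_b hM hnb hc
  exact M_a_ne_b hdisj hM hnb i j hab

lemma M_b_eq_d (hdisj : ∀ i j, ¬ (x i j = true ∧ y i j = true)) (hM : IsMatching M)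
    (hnb : ∀ u v, ¬ Blocks (Rtier x y) M u v) (j : Fin n) : M (𝒃 j) = 𝒅 j := by
  by_contra hb
  obtain ⟨i, hba | hbc, -⟩ := exists_M_b_eq_a_or_c hM hnb hb
  · exact M_a_ne_b hdisj hM hnb i j (by rw [← hba, hM.1])
  · have hcb : M (𝒄 i) = 𝒃 j := by rw [← hbc, hM.1]
    simp [M_c_eq_a hdisj hM hnb i] at hcb

lemma eq_M0_of_not_blocks (hdisj : ∀ i j, ¬ (x i j = true ∧ y i j = true)) (hM : IsMatching M)
    (hnb : ∀ u v, ¬ Blocks (Rtier x y) M u v) : M = M0 := by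
  have hac (i : Fin n) : M (𝒂 i) = 𝒄 i := by rw [← M_c_eq_a hdisj hM hnb i, hM.1]
  have hdb (j : Fin n) : M (𝒅 j) = 𝒃 j := by rw [← M_b_eq_d hdisj hM hnb j, hM.1]
  funext ⟨k, i⟩
  fin_cases k <;> simp [M0, hac, hdb, M_b_eq_d hdisj hM hnb, M_c_eq_a hdisj hM hnb]

end RInstance

/-- If `x` and `y` are disjoint then `M₀` is the unique stable matching of `R(x,y)`. -/
theorem stmt4 {n : ℕ} (x y : Fin n → Fin n → Bool)
    (rank : Fin 4 × Fin n → Fin 4 × Fin n → ℕ) (hpref : IsRPref x y rank)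
    (hdisj : ∀ i j, ¬ (x i j = true ∧ y i j = true)) :
    IsStable rank (M0 (n := n)) ∧
      ∀ M : Fin 4 × Fin n → Fin 4 × Fin n, IsStable rank M → M = M0 := by
  have href : RefinesTiers (Rtier x y) rank := hpref.1
  refine ⟨isStable_of_refinesTiers href isMatching_M0 (Rtier_M0_lt_or_lt hdisj), ?_⟩
  intro M hM
  exact eq_M0_of_not_blocks hdisj hM.1 (hM.not_blocks_of_refinesTiers href)
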